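/- (Misère Periodicity Theorem, game-level form) Let Γ be an octal game with octal code 0.d₁...d_k, where d_k ≠ 0 and d_i = 0 for i > k, and let H_n denote the Γ-heap of size n. Fix n₀ > 0 and p > 0, set M = 2n₀ + 2p + k, let 𝒜_M = cl(H₀, H₁, ..., H_M) and let 𝒜 = cl(H₀, H₁, H₂, ...) be the set of all positions of Γ. Suppose H_{n+p} ≡_{𝒜_M} H_n for every n with n₀ ≤ n < 2n₀ + p + k. Then: (a) for all G₁, G₂ ∈ 𝒜_M, G₁ ≡_{𝒜_M} G₂ if and only if G₁ ≡_𝒜 G₂; and (b) H_{n+p} ≡_𝒜 H_n for all n ≥ n₀. -/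

import Mathlib

universe u

noncomputable section

namespace SetTheory

/-- Pre-games, as formerly defined in Mathlib (`Mathlib.SetTheory.Game.PGame`), which has
since been removed from Mathlib. -/
inductive PGame : Type (u + 1)
  | mk : ∀ α β : Type u, (α → PGame) → (β → PGame) → PGame

namespace PGame

/-- The indexing type for allowable moves by Left. -/
def LeftMoves : PGame → Type u
  | mk l _ _ _ => l

/-- The indexing type for allowable moves by Right. -/
def RightMoves : PGame → Type u
  | mk _ r _ _ => r

/-- The new game after Left makes an allowed move. -/
def moveLeft : ∀ g : PGame, LeftMoves g → PGame
  | mk _l _ L _ => L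

/-- The new game after Right makes an allowed move. -/
def moveRight : ∀ g : PGame, RightMoves g → PGame
  | mk _ _r _ R => R

/-- The pre-game `Zero` is defined by `0 = { | }`. -/
instance : Zero PGame :=
  ⟨⟨PEmpty, PEmpty, PEmpty.elim, PEmpty.elim⟩⟩

/-- The sum of `x = {xL | xR}` and `y = {yL | yR}` is `{xL + y, x + yL | xR + y, x + yR}`. -/
def add (x y : PGame.{u}) : PGame.{u} := by
  induction x generalizing y with | mk xl xr _ _ IHxl IHxr => _
  induction y with | mk yl yr yL yR IHyl IHyr => _
  have y := mk yl yr yL yR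
  refine ⟨xl ⊕ yl, xr ⊕ yr, Sum.rec ?_ ?_, Sum.rec ?_ ?_⟩
  · exact fun i => IHxl i y
  · exact fun i => IHyl i
  · exact fun i => IHxr i y
  · exact fun i => IHyr i

instance : Add PGame.{u} :=
  ⟨add⟩

end PGame

end SetTheory

open SetTheory PGame

/-- `G` is a misère P-position: `G` has at least one option and every option of `G` is a
misère N-position (i.e. not a misère P-position).  In particular the empty game `0` is a
misère N-position.  (For an impartial game the options are the left moves.) -/
def MisereP : PGame → Prop
  | PGame.mk l _ L _ => Nonempty l ∧ ∀ i, ¬ MisereP (L i)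

/-- Membership in the closure `cl 𝒮` of a set `𝒮` of games: the smallest closed set
containing `𝒮` (all finite disjunctive sums of subpositions of games in `𝒮`, including
the empty sum `0`). -/
inductive InClosure (S : Set PGame) : PGame → Prop
  | base {G} : G ∈ S → InClosure S G
  | zero : InClosure S 0
  | add {G H} : InClosure S G → InClosure S H → InClosure S (G + H)
  | moveLeft {G} (i : G.LeftMoves) : InClosure S G → InClosure S (G.moveLeft i)
  | moveRight {G} (j : G.RightMoves) : InClosure S G → InClosure S (G.moveRight j)

/-- The closure `cl 𝒮` of a set `𝒮` of games. -/
def gameClosure (S : Set PGame) : Set PGame := {G | InClosure S G}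

/-- `G ≡_ℬ H`: for every `X ∈ ℬ`, the games `G + X` and `H + X` have the same misère
outcome. -/
def MisEquivOn (B : Set PGame) (G H : PGame) : Prop :=
  ∀ X ∈ B, (MisereP (G + X) ↔ MisereP (H + X))

/-- The heap `H n` of the octal game with code digits `d 1, d 2, d 3, …`
(the value `d 0` is irrelevant: removals of `j` boxes are only allowed for `j ≥ 1`).
Writing `d j = ε₀ + 2·ε₁ + 4·ε₂`, a move removing `j` boxes from a heap of size `n` may go:
* to the empty position `0`, if `j = n` and `ε₀ = 1`;
* to the single heap `H (n - j)`, if `n - j ≥ 1` and `ε₁ = 1`;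
* to the sum `H a + H b` with `a, b ≥ 1` and `a + b = n - j`, if `ε₂ = 1`. -/
def octalHeap (d : ℕ → ℕ) : ℕ → PGame.{0}
  | n =>
    PGame.mk
      ({ j : ℕ // j = n ∧ 1 ≤ j ∧ (d j).testBit 0 } ⊕
        ({ j : ℕ // 1 ≤ j ∧ j + 1 ≤ n ∧ (d j).testBit 1 } ⊕
          { q : ℕ × ℕ × ℕ //
              1 ≤ q.1 ∧ 1 ≤ q.2.1 ∧ 1 ≤ q.2.2 ∧ q.1 + q.2.1 + q.2.2 = n ∧
                (d q.1).testBit 2 }))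
      ({ j : ℕ // j = n ∧ 1 ≤ j ∧ (d j).testBit 0 } ⊕
        ({ j : ℕ // 1 ≤ j ∧ j + 1 ≤ n ∧ (d j).testBit 1 } ⊕
          { q : ℕ × ℕ × ℕ //
              1 ≤ q.1 ∧ 1 ≤ q.2.1 ∧ 1 ≤ q.2.2 ∧ q.1 + q.2.1 + q.2.2 = n ∧
                (d q.1).testBit 2 }))
      (fun i =>
        match i with
        | Sum.inl _ => 0
        | Sum.inr (Sum.inl ⟨j, _hj⟩) => octalHeap d (n - j)
        | Sum.inr (Sum.inr ⟨⟨_, a, b⟩, _hq⟩) => octalHeap d a + octalHeap d b)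
      (fun i =>
        match i with
        | Sum.inl _ => 0
        | Sum.inr (Sum.inl ⟨j, _hj⟩) => octalHeap d (n - j)
        | Sum.inr (Sum.inr ⟨⟨_, a, b⟩, _hq⟩) => octalHeap d a + octalHeap d b)
termination_by n => n
decreasing_by all_goals (simp_all; omega)

/-!
Up to relabelling, every position of `𝒜` is a sum of heaps `heapSum d l`, and a move replaces
one heap of `l` by one of its octal options. That `H (n + p) + Σ l` and `H n + Σ l` have the same
misère outcome for `n ≥ n₀` is proved by well-founded induction on `(n + Σ l, Σ l)`. If
`n ≥ 2n₀ + p + k`, the options of `H n` and `H (n + p)` correspond, each octal option of such a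
heap keeping a part of size at least `n₀` that absorbs the shift. If some heap `q + p` of `l`
exceeds `M`, then `q > n` and shifting `H n` is traded for shifting `H q` by exchanging the roles
of the two heaps. Otherwise the hypothesis applies. Part (a) follows because periodicity turns
every position of `𝒜` into one of `𝒜_M` that behaves the same in every context.
-/

namespace SetTheory.PGame

inductive Relabelling : PGame.{u} → PGame.{u} → Prop
  | mk {x y : PGame} (L : x.LeftMoves ≃ y.LeftMoves) (R : x.RightMoves ≃ y.RightMoves) :
      (∀ i, Relabelling (x.moveLeft i) (y.moveLeft (L i))) →
      (∀ j, Relabelling (x.moveRight j) (y.moveRight (R j))) → Relabelling x y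

infixl:50 " ≡r " => Relabelling

namespace Relabelling

theorem refl (x : PGame.{u}) : x ≡r x := by
  induction x with
  | mk xl xr xL xR ihl ihr => exact ⟨Equiv.refl _, Equiv.refl _, ihl, ihr⟩

theorem symm {x y : PGame.{u}} (r : x ≡r y) : y ≡r x := by
  induction r with
  | @mk x y L R _ _ ihL ihR =>
    refine ⟨L.symm, R.symm, fun i => ?_, fun j => ?_⟩
    · simpa using ihL (L.symm i)
    · simpa using ihR (R.symm j)

theorem trans {x y z : PGame.{u}} (r₁ : x ≡r y) (r₂ : y ≡r z) : x ≡r z := by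
  induction r₁ generalizing z with
  | mk L R _ _ ihL ihR =>
    obtain ⟨L', R', hL', hR'⟩ := r₂
    exact ⟨L.trans L', R.trans R', fun i => ihL i (hL' (L i)), fun j => ihR j (hR' (R j))⟩

theorem exists_moveLeft {x y : PGame.{u}} (r : x ≡r y) (i : x.LeftMoves) :
    ∃ i', x.moveLeft i ≡r y.moveLeft i' := by
  obtain ⟨L, _, hL, _⟩ := r
  exact ⟨L i, hL i⟩

theorem exists_moveRight {x y : PGame.{u}} (r : x ≡r y) (j : x.RightMoves) :
    ∃ j', x.moveRight j ≡r y.moveRight j' := by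
  obtain ⟨_, R, _, hR⟩ := r
  exact ⟨R j, hR j⟩

theorem add_congr {w x y z : PGame.{u}} (r₁ : w ≡r x) (r₂ : y ≡r z) : w + y ≡r x + z := by
  induction r₁ generalizing y z with
  | @mk w x L R hL hR ihL ihR =>
    induction r₂ with
    | @mk y z L' R' hL' hR' ihL' ihR' =>
      cases w; cases x; cases y; cases z
      refine ⟨Equiv.sumCongr L L', Equiv.sumCongr R R', ?_, ?_⟩
      · rintro (i | i)
        · exact ihL i ⟨L', R', hL', hR'⟩
        · exact ihL' i
      · rintro (j | j)
        · exact ihR j ⟨L', R', hL', hR'⟩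
        · exact ihR' j

end Relabelling

theorem add_comm_relabelling (x y : PGame.{u}) : x + y ≡r y + x := by
  induction x generalizing y with
  | mk xl xr xL xR ihxl ihxr =>
    induction y with
    | mk yl yr yL yR ihyl ihyr =>
      refine ⟨Equiv.sumComm xl yl, Equiv.sumComm xr yr, ?_, ?_⟩
      · rintro (i | i)
        · exact ihxl i _
        · exact ihyl i
      · rintro (j | j)
        · exact ihxr j _
        · exact ihyr j

theorem add_assoc_relabelling (x y z : PGame.{u}) : x + y + z ≡r x + (y + z) := by
  induction x generalizing y z with
  | mk xl xr xL xR ihxl ihxr =>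
    induction y generalizing z with
    | mk yl yr yL yR ihyl ihyr =>
      induction z with
      | mk zl zr zL zR ihzl ihzr =>
        refine ⟨Equiv.sumAssoc xl yl zl, Equiv.sumAssoc xr yr zr, ?_, ?_⟩
        · rintro ((i | i) | i)
          · exact ihxl i _ _
          · exact ihyl i _
          · exact ihzl i
        · rintro ((j | j) | j)
          · exact ihxr j _ _
          · exact ihyr j _
          · exact ihzr j

theorem zero_add_relabelling (x : PGame.{u}) : 0 + x ≡r x := by
  induction x with
  | mk xl xr xL xR ihl ihr =>
    refine ⟨Equiv.emptySum _ _, Equiv.emptySum _ _, ?_, ?_⟩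
    · rintro (i | i)
      · exact i.elim
      · exact ihl i
    · rintro (j | j)
      · exact j.elim
      · exact ihr j

theorem add_zero_relabelling (x : PGame.{u}) : x + 0 ≡r x := by
  induction x with
  | mk xl xr xL xR ihl ihr =>
    refine ⟨Equiv.sumEmpty _ _, Equiv.sumEmpty _ _, ?_, ?_⟩
    · rintro (i | i)
      · exact ihl i
      · exact i.elim
    · rintro (j | j)
      · exact ihr j
      · exact j.elim

def toLeftMovesAdd {x y : PGame.{u}} : x.LeftMoves ⊕ y.LeftMoves ≃ (x + y).LeftMoves := by
  cases x; cases y; exact Equiv.refl _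

theorem add_moveLeft_inl (x : PGame.{u}) {y : PGame.{u}} (i : x.LeftMoves) :
    (x + y).moveLeft (toLeftMovesAdd (.inl i)) = x.moveLeft i + y := by
  cases x; cases y; rfl

theorem add_moveLeft_inr (x : PGame.{u}) {y : PGame.{u}} (i : y.LeftMoves) :
    (x + y).moveLeft (toLeftMovesAdd (.inr i)) = x + y.moveLeft i := by
  cases x; cases y; rfl

theorem exists_add_moveRight_eq_moveLeft {x y : PGame.{u}}
    (hx : ∀ j, ∃ i, x.moveRight j = x.moveLeft i)
    (hy : ∀ j, ∃ i, y.moveRight j = y.moveLeft i)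
    (j : (x + y).RightMoves) : ∃ i, (x + y).moveRight j = (x + y).moveLeft i := by
  obtain ⟨xl, xr, xL, xR⟩ := x
  obtain ⟨yl, yr, yL, yR⟩ := y
  rcases j with j | j
  · obtain ⟨i, hi⟩ := hx j
    exact ⟨.inl i, congrArg (· + mk yl yr yL yR) hi⟩
  · obtain ⟨i, hi⟩ := hy j
    exact ⟨.inr i, congrArg (mk xl xr xL xR + ·) hi⟩

end SetTheory.PGame

theorem misereP_def (x : PGame) :
    MisereP x ↔ Nonempty x.LeftMoves ∧ ∀ i, ¬ MisereP (x.moveLeft i) := by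
  cases x; rfl

theorem misereP_congr {x y : PGame} (r : x ≡r y) : MisereP x ↔ MisereP y := by
  induction r with
  | @mk x y L _ _ _ ihL _ =>
    rw [misereP_def, misereP_def, L.nonempty_congr]
    refine and_congr_right fun _ => ⟨fun h i => ?_, fun h i => (ihL i).not.2 (h (L i))⟩
    simpa [ihL] using h (L.symm i)

theorem gameClosure_mono {S T : Set PGame} (hST : S ⊆ T) : gameClosure S ⊆ gameClosure T := by
  intro G hG
  induction hG with
  | base hG => exact .base (hST hG)
  | zero => exact .zero
  | add _ _ ih₁ ih₂ => exact .add ih₁ ih₂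
  | moveLeft i _ ih => exact .moveLeft i ih
  | moveRight j _ ih => exact .moveRight j ih

section Octal

variable {d : ℕ → ℕ}

theorem le_of_testBit {k j b : ℕ} (hk : ∀ i, k < i → d i = 0) (h : (d j).testBit b) :
    j ≤ k := by
  by_contra hjk
  simp [hk j (by omega)] at h

/-- `o` lists the sizes of the heaps left by one move in `H n`. -/
inductive IsOctalOption (d : ℕ → ℕ) : ℕ → List ℕ → Prop
  | remove {n} : 1 ≤ n → (d n).testBit 0 → IsOctalOption d n []
  | shorten {n j} : 1 ≤ j → j + 1 ≤ n → (d j).testBit 1 → IsOctalOption d n [n - j]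
  | split {n j a b} : 1 ≤ j → 1 ≤ a → 1 ≤ b → j + a + b = n → (d j).testBit 2 →
      IsOctalOption d n [a, b]

namespace IsOctalOption

variable {n : ℕ} {o : List ℕ}

theorem sum_lt (h : IsOctalOption d n o) : o.sum < n := by
  cases h <;> simp only [List.sum_cons, List.sum_nil] <;> omega

theorem lt_of_mem (h : IsOctalOption d n o) {m : ℕ} (hm : m ∈ o) : m < n := by
  cases h <;> simp only [List.mem_cons, List.not_mem_nil, or_false] at hm <;> omega

variable {k n₀ p : ℕ} (hk : ∀ i, k < i → d i = 0) (hn₀ : 0 < n₀)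
  (hn : 2 * n₀ + p + k ≤ n)
include hk hn₀ hn

theorem exists_shift (h : IsOctalOption d n o) :
    ∃ m r, n₀ ≤ m ∧ o.Perm (m :: r) ∧ IsOctalOption d (n + p) ((m + p) :: r) := by
  cases h with
  | remove _ hb => have := le_of_testBit hk hb; omega
  | @shorten j hj hjn hb =>
    have := le_of_testBit hk hb
    refine ⟨n - j, [], by omega, .refl _, ?_⟩
    rw [show n - j + p = n + p - j by omega]
    exact .shorten hj (by omega) hb
  | @split j a b hj ha hb hsum hbit =>
    have := le_of_testBit hk hbit
    by_cases ha₀ : n₀ ≤ a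
    · exact ⟨a, [b], ha₀, .refl _, .split hj (by omega) hb (by omega) hbit⟩
    · exact ⟨b, [a], by omega, .swap b a [], .split hj (by omega) ha (by omega) hbit⟩

theorem exists_unshift (h : IsOctalOption d (n + p) o) :
    ∃ m r, n₀ ≤ m ∧ o.Perm ((m + p) :: r) ∧ IsOctalOption d n (m :: r) := by
  cases h with
  | remove _ hb => have := le_of_testBit hk hb; omega
  | @shorten j hj hjn hb =>
    have := le_of_testBit hk hb
    refine ⟨n - j, [], by omega, ?_, .shorten hj (by omega) hb⟩
    rw [show n - j + p = n + p - j by omega]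
  | @split j a b hj ha hb hsum hbit =>
    have := le_of_testBit hk hbit
    by_cases ha₀ : n₀ + p ≤ a
    · obtain ⟨a, rfl⟩ : ∃ a', a = a' + p := ⟨a - p, by omega⟩
      exact ⟨a, [b], by omega, .refl _, .split hj (by omega) hb (by omega) hbit⟩
    · obtain ⟨b, rfl⟩ : ∃ b', b = b' + p := ⟨b - p, by omega⟩
      exact ⟨b, [a], by omega, .swap _ a [], .split hj (by omega) ha (by omega) hbit⟩

end IsOctalOption

end Octal

section HeapSum

variable {d : ℕ → ℕ}

def heapSum (d : ℕ → ℕ) : List ℕ → PGame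
  | [] => 0
  | n :: l => octalHeap d n + heapSum d l

theorem heapSum_append_relabelling (l₁ l₂ : List ℕ) :
    heapSum d (l₁ ++ l₂) ≡r heapSum d l₁ + heapSum d l₂ := by
  induction l₁ with
  | nil => exact (zero_add_relabelling _).symm
  | cons n l₁ ih =>
    exact ((Relabelling.refl _).add_congr ih).trans (add_assoc_relabelling _ _ _).symm

theorem heapSum_perm_relabelling {l l' : List ℕ} (h : l.Perm l') :
    heapSum d l ≡r heapSum d l' := by
  induction h with
  | nil => exact .refl _
  | cons n _ ih => exact (Relabelling.refl _).add_congr ih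
  | swap m n l =>
    exact (add_assoc_relabelling _ _ _).symm.trans
      (((add_comm_relabelling _ _).add_congr (.refl _)).trans (add_assoc_relabelling _ _ _))
  | trans _ _ ih₁ ih₂ => exact ih₁.trans ih₂

theorem misereP_heapSum_perm {l l' : List ℕ} (h : l.Perm l') :
    MisereP (heapSum d l) ↔ MisereP (heapSum d l') :=
  misereP_congr (heapSum_perm_relabelling h)

theorem misereP_heapSum_swap (m n : ℕ) (l : List ℕ) :
    MisereP (heapSum d (m :: n :: l)) ↔ MisereP (heapSum d (n :: m :: l)) :=
  misereP_heapSum_perm (.swap n m l)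

theorem heapSum_mem_gameClosure {S : Set PGame} {l : List ℕ}
    (h : ∀ m ∈ l, octalHeap d m ∈ S) :
    heapSum d l ∈ gameClosure S := by
  induction l with
  | nil => exact .zero
  | cons m l ih =>
    exact .add (.base (h m (by simp))) (ih fun x hx => h x (by simp [hx]))

theorem octalHeap_moveLeft_relabelling (n : ℕ) (i : (octalHeap d n).LeftMoves) :
    ∃ o, IsOctalOption d n o ∧ (octalHeap d n).moveLeft i ≡r heapSum d o := by
  revert i
  rw [octalHeap]
  rintro (⟨j, rfl, hj, hb⟩ | ⟨j, hj, hjn, hb⟩ | ⟨⟨j, a, b⟩, hj, ha, hb, hsum, hbit⟩)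
  · exact ⟨[], .remove hj hb, .refl _⟩
  · exact ⟨[n - j], .shorten hj hjn hb, (add_zero_relabelling _).symm⟩
  · exact ⟨[a, b], .split hj ha hb hsum hbit,
      (Relabelling.refl _).add_congr (add_zero_relabelling _).symm⟩

theorem IsOctalOption.exists_moveLeft_relabelling {n : ℕ} {o : List ℕ}
    (h : IsOctalOption d n o) :
    ∃ i, (octalHeap d n).moveLeft i ≡r heapSum d o := by
  rw [octalHeap]
  cases h with
  | remove hn hb => exact ⟨.inl ⟨n, rfl, hn, hb⟩, .refl _⟩
  | shorten hj hjn hb => exact ⟨.inr (.inl ⟨_, hj, hjn, hb⟩), (add_zero_relabelling _).symm⟩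
  | split hj ha hb hsum hbit =>
    exact ⟨.inr (.inr ⟨⟨_, _, _⟩, hj, ha, hb, hsum, hbit⟩),
      (Relabelling.refl _).add_congr (add_zero_relabelling _).symm⟩

theorem octalHeap_moveRight_eq_moveLeft (n : ℕ) (j : (octalHeap d n).RightMoves) :
    ∃ i, (octalHeap d n).moveRight j = (octalHeap d n).moveLeft i := by
  revert j
  rw [octalHeap]
  exact fun j => ⟨j, rfl⟩

theorem heapSum_moveRight_eq_moveLeft (l : List ℕ) (j : (heapSum d l).RightMoves) :
    ∃ i, (heapSum d l).moveRight j = (heapSum d l).moveLeft i := by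
  induction l with
  | nil => exact j.elim
  | cons n l ih => exact exists_add_moveRight_eq_moveLeft (octalHeap_moveRight_eq_moveLeft n) ih j

inductive HeapSumMove (d : ℕ → ℕ) : List ℕ → List ℕ → Prop
  | head {n o l} : IsOctalOption d n o → HeapSumMove d (n :: l) (o ++ l)
  | tail {n l l'} : HeapSumMove d l l' → HeapSumMove d (n :: l) (n :: l')

namespace HeapSumMove

theorem sum_lt {l l' : List ℕ} (h : HeapSumMove d l l') : l'.sum < l.sum := by
  induction h with
  | head h => have := h.sum_lt; simp only [List.sum_cons, List.sum_append]; omega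
  | tail _ ih => simp only [List.sum_cons]; omega

theorem forall_mem {P : ℕ → Prop} (hP : ∀ ⦃m n⦄, m ≤ n → P n → P m) {l l' : List ℕ}
    (h : HeapSumMove d l l') (hl : ∀ m ∈ l, P m) : ∀ m ∈ l', P m := by
  induction h with
  | @head n o l h =>
    simp only [List.mem_cons, List.mem_append, forall_eq_or_imp] at hl ⊢
    rintro m (hm | hm)
    · exact hP (h.lt_of_mem hm).le hl.1
    · exact hl.2 m hm
  | tail _ ih =>
    simp only [List.mem_cons, forall_eq_or_imp] at hl ⊢
    exact ⟨hl.1, ih hl.2⟩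

theorem cons_iff {n : ℕ} {l l' : List ℕ} :
    HeapSumMove d (n :: l) l' ↔
      (∃ o, IsOctalOption d n o ∧ l' = o ++ l) ∨
        ∃ l'', HeapSumMove d l l'' ∧ l' = n :: l'' := by
  constructor
  · rintro (⟨h⟩ | ⟨h⟩)
    exacts [.inl ⟨_, h, rfl⟩, .inr ⟨_, h, rfl⟩]
  · rintro (⟨o, h, rfl⟩ | ⟨l'', h, rfl⟩)
    exacts [.head h, .tail h]

theorem exists_moveLeft_relabelling {l l' : List ℕ} (h : HeapSumMove d l l') :
    ∃ i, (heapSum d l).moveLeft i ≡r heapSum d l' := by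
  induction h with
  | @head n o l h =>
    obtain ⟨i, hi⟩ := h.exists_moveLeft_relabelling
    refine ⟨toLeftMovesAdd (.inl i), ?_⟩
    dsimp only [heapSum]
    rw [add_moveLeft_inl]
    exact (hi.add_congr (.refl _)).trans (heapSum_append_relabelling o l).symm
  | tail _ ih =>
    obtain ⟨i, hi⟩ := ih
    refine ⟨toLeftMovesAdd (.inr i), ?_⟩
    dsimp only [heapSum]
    rw [add_moveLeft_inr]
    exact (Relabelling.refl _).add_congr hi

end HeapSumMove

theorem heapSum_moveLeft_relabelling (l : List ℕ) (i : (heapSum d l).LeftMoves) :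
    ∃ l', HeapSumMove d l l' ∧ (heapSum d l).moveLeft i ≡r heapSum d l' := by
  induction l with
  | nil => exact i.elim
  | cons n l ih =>
    dsimp only [heapSum] at i ⊢
    rw [← toLeftMovesAdd.apply_symm_apply i]
    rcases toLeftMovesAdd.symm i with i | i
    · obtain ⟨o, ho, hi⟩ := octalHeap_moveLeft_relabelling n i
      rw [add_moveLeft_inl]
      exact ⟨o ++ l, .head ho,
        (hi.add_congr (.refl _)).trans (heapSum_append_relabelling o l).symm⟩
    · obtain ⟨l', hl', hi⟩ := ih i
      rw [add_moveLeft_inr]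
      exact ⟨n :: l', .tail hl', (Relabelling.refl _).add_congr hi⟩

theorem misereP_heapSum_iff (l : List ℕ) :
    MisereP (heapSum d l) ↔
      (∃ l', HeapSumMove d l l') ∧
        ∀ l', HeapSumMove d l l' → ¬ MisereP (heapSum d l') := by
  rw [misereP_def]
  refine and_congr ⟨fun ⟨i⟩ => ?_, fun ⟨l', h⟩ => ?_⟩
    ⟨fun h l' hl' => ?_, fun h i => ?_⟩
  · obtain ⟨l', hl', -⟩ := heapSum_moveLeft_relabelling l i
    exact ⟨l', hl'⟩
  · obtain ⟨i, -⟩ := h.exists_moveLeft_relabelling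
    exact ⟨i⟩
  · obtain ⟨i, hi⟩ := hl'.exists_moveLeft_relabelling
    exact (misereP_congr hi).not.1 (h i)
  · obtain ⟨l', hl', hi⟩ := heapSum_moveLeft_relabelling l i
    exact (misereP_congr hi).not.2 (h l' hl')

theorem misereP_heapSum_congr {l₁ l₂ : List ℕ}
    (h₁ : ∀ l₁', HeapSumMove d l₁ l₁' →
      ∃ l₂', HeapSumMove d l₂ l₂' ∧ (MisereP (heapSum d l₁') ↔ MisereP (heapSum d l₂')))
    (h₂ : ∀ l₂', HeapSumMove d l₂ l₂' →
      ∃ l₁', HeapSumMove d l₁ l₁' ∧ (MisereP (heapSum d l₁') ↔ MisereP (heapSum d l₂'))) :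
    MisereP (heapSum d l₁) ↔ MisereP (heapSum d l₂) := by
  rw [misereP_heapSum_iff, misereP_heapSum_iff]
  refine and_congr ⟨fun ⟨l₁', h⟩ => ?_, fun ⟨l₂', h⟩ => ?_⟩
    ⟨fun h l₂' hl₂' => ?_, fun h l₁' hl₁' => ?_⟩
  · obtain ⟨l₂', h', -⟩ := h₁ l₁' h
    exact ⟨l₂', h'⟩
  · obtain ⟨l₁', h', -⟩ := h₂ l₂' h
    exact ⟨l₁', h'⟩
  · obtain ⟨l₁', hl₁', he⟩ := h₂ l₂' hl₂'
    exact he.not.1 (h l₁' hl₁')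
  · obtain ⟨l₂', hl₂', he⟩ := h₁ l₁' hl₁'
    exact he.not.2 (h l₂' hl₂')

theorem exists_heapSum_of_mem_gameClosure {S : Set PGame} {P : ℕ → Prop}
    (hP : ∀ ⦃m n⦄, m ≤ n → P n → P m) (hS : ∀ X ∈ S, ∃ n, P n ∧ X = octalHeap d n)
    {G : PGame} (hG : G ∈ gameClosure S) : ∃ l, (∀ m ∈ l, P m) ∧ G ≡r heapSum d l := by
  induction hG with
  | base hG =>
    obtain ⟨n, hn, rfl⟩ := hS _ hG
    exact ⟨[n], by simpa using hn, (add_zero_relabelling _).symm⟩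
  | zero => exact ⟨[], by simp, .refl _⟩
  | add _ _ ih₁ ih₂ =>
    obtain ⟨l₁, hl₁, r₁⟩ := ih₁
    obtain ⟨l₂, hl₂, r₂⟩ := ih₂
    refine ⟨l₁ ++ l₂, ?_, (r₁.add_congr r₂).trans (heapSum_append_relabelling l₁ l₂).symm⟩
    simpa only [List.mem_append, or_imp, forall_and] using ⟨hl₁, hl₂⟩
  | moveLeft i _ ih =>
    obtain ⟨l, hl, r⟩ := ih
    obtain ⟨i', r'⟩ := r.exists_moveLeft i
    obtain ⟨l', hl', r''⟩ := heapSum_moveLeft_relabelling l i'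
    exact ⟨l', hl'.forall_mem hP hl, r'.trans r''⟩
  | moveRight j _ ih =>
    obtain ⟨l, hl, r⟩ := ih
    obtain ⟨j', r'⟩ := r.exists_moveRight j
    obtain ⟨i', hi'⟩ := heapSum_moveRight_eq_moveLeft l j'
    obtain ⟨l', hl', r''⟩ := heapSum_moveLeft_relabelling l i'
    exact ⟨l', hl'.forall_mem hP hl, (hi' ▸ r').trans r''⟩

theorem exists_heapSum_of_mem_gameClosure_octalHeap {G : PGame}
    (hG : G ∈ gameClosure {X | ∃ n, X = octalHeap d n}) : ∃ l, G ≡r heapSum d l :=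
  (exists_heapSum_of_mem_gameClosure (S := {X | ∃ n, X = octalHeap d n}) (P := fun _ => True)
    (fun _ _ _ _ => trivial) (fun _ ⟨n, hn⟩ => ⟨n, trivial, hn⟩) hG).imp fun _ => And.right

end HeapSum

section Periodicity

variable {d : ℕ → ℕ} {k n₀ p : ℕ}

def ShiftInvariant (d : ℕ → ℕ) (p n : ℕ) (l : List ℕ) : Prop :=
  MisereP (heapSum d ((n + p) :: l)) ↔ MisereP (heapSum d (n :: l))

theorem shiftInvariant_perm {n : ℕ} {l l' : List ℕ} (h : l.Perm l') :
    ShiftInvariant d p n l ↔ ShiftInvariant d p n l' := by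
  rw [ShiftInvariant, ShiftInvariant, misereP_heapSum_perm (h.cons _),
    misereP_heapSum_perm (h.cons _)]

theorem ShiftInvariant.cons_add {n q : ℕ} {r : List ℕ}
    (h₁ : ShiftInvariant d p q ((n + p) :: r))
    (h₂ : ShiftInvariant d p n (q :: r)) (h₃ : ShiftInvariant d p q (n :: r)) :
    ShiftInvariant d p n ((q + p) :: r) :=
  calc MisereP (heapSum d ((n + p) :: (q + p) :: r))
      ↔ MisereP (heapSum d ((q + p) :: (n + p) :: r)) := misereP_heapSum_swap _ _ _
    _ ↔ MisereP (heapSum d (q :: (n + p) :: r)) := h₁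
    _ ↔ MisereP (heapSum d ((n + p) :: q :: r)) := misereP_heapSum_swap _ _ _
    _ ↔ MisereP (heapSum d (n :: q :: r)) := h₂
    _ ↔ MisereP (heapSum d (q :: n :: r)) := misereP_heapSum_swap _ _ _
    _ ↔ MisereP (heapSum d ((q + p) :: n :: r)) := h₃.symm
    _ ↔ MisereP (heapSum d (n :: (q + p) :: r)) := misereP_heapSum_swap _ _ _

/-- Every option of a large heap `H n` is, up to order, a shifted option of `H (n + p)` and
conversely, the shift happening in a part of size at least `n₀`. -/
theorem shiftInvariant_of_large (hk : ∀ i, k < i → d i = 0) (hn₀ : 0 < n₀)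
    {n : ℕ} {l : List ℕ} (hn : 2 * n₀ + p + k ≤ n)
    (ih : ∀ m l', n₀ ≤ m → m + l'.sum < n + l.sum → ShiftInvariant d p m l') :
    ShiftInvariant d p n l := by
  have hn' : n₀ ≤ n := by omega
  apply misereP_heapSum_congr
  · intro l' h
    rcases HeapSumMove.cons_iff.1 h with ⟨o, ho, rfl⟩ | ⟨l'', hl, rfl⟩
    · obtain ⟨m, r, hm, hperm, ho'⟩ := ho.exists_unshift hk hn₀ hn
      have hsum := ho'.sum_lt
      refine ⟨m :: (r ++ l), .head ho', ?_⟩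
      rw [misereP_heapSum_perm (hperm.append_right l)]
      exact ih m (r ++ l) hm (by simp only [List.sum_cons, List.sum_append] at hsum ⊢; omega)
    · exact ⟨n :: l'', .tail hl, ih n l'' hn' (by have := hl.sum_lt; omega)⟩
  · intro l' h
    rcases HeapSumMove.cons_iff.1 h with ⟨o, ho, rfl⟩ | ⟨l'', hl, rfl⟩
    · obtain ⟨m, r, hm, hperm, ho'⟩ := ho.exists_shift hk hn₀ hn
      have hsum : (m :: r).sum < n := hperm.sum_eq ▸ ho.sum_lt
      refine ⟨(m + p) :: (r ++ l), .head ho', ?_⟩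
      rw [misereP_heapSum_perm (hperm.append_right l)]
      exact ih m (r ++ l) hm (by simp only [List.sum_cons, List.sum_append] at hsum ⊢; omega)
    · exact ⟨(n + p) :: l'', .tail hl, ih n l'' hn' (by have := hl.sum_lt; omega)⟩

theorem shiftInvariant_of_window (hk : ∀ i, k < i → d i = 0) (hn₀ : 0 < n₀) (hp : 0 < p)
    (hwin : ∀ n, n₀ ≤ n → n < 2 * n₀ + p + k →
      ∀ l : List ℕ, (∀ m ∈ l, m ≤ 2 * n₀ + 2 * p + k) → ShiftInvariant d p n l)
    (n : ℕ) (l : List ℕ) (hn : n₀ ≤ n) : ShiftInvariant d p n l := by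
  by_cases hlarge : 2 * n₀ + p + k ≤ n
  · exact shiftInvariant_of_large hk hn₀ hlarge fun m l' hm _ =>
      shiftInvariant_of_window hk hn₀ hp hwin m l' hm
  by_cases hbig : ∃ q ∈ l, 2 * n₀ + 2 * p + k < q
  · obtain ⟨q, hq, hqM⟩ := hbig
    obtain ⟨q, rfl⟩ : ∃ q', q = q' + p := ⟨q - p, by omega⟩
    have hperm := List.perm_cons_erase hq
    have hsum := hperm.sum_eq
    rw [shiftInvariant_perm hperm]
    exact .cons_add
      (shiftInvariant_of_window hk hn₀ hp hwin q ((n + p) :: l.erase (q + p)) (by omega))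
      (shiftInvariant_of_window hk hn₀ hp hwin n (q :: l.erase (q + p)) hn)
      (shiftInvariant_of_window hk hn₀ hp hwin q (n :: l.erase (q + p)) (by omega))
  · push Not at hbig
    exact hwin n hn (by omega) l hbig
termination_by (n + l.sum, l.sum)
decreasing_by
  all_goals rw [Prod.lex_def]; simp only [List.sum_cons] at *; omega

end Periodicity

section Reduction

variable {d : ℕ → ℕ} {n₀ p B : ℕ}
  (hshift : ∀ n l, n₀ ≤ n → ShiftInvariant d p n l) (hp : 0 < p) (hB : n₀ + p ≤ B)
include hshift hp hB

theorem exists_le_forall_misereP_heapSum_cons_iff (m : ℕ) :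
    ∃ m' ≤ B, ∀ c, MisereP (heapSum d (m :: c)) ↔ MisereP (heapSum d (m' :: c)) := by
  induction m using Nat.strong_induction_on with
  | _ m ih =>
    by_cases hm : m ≤ B
    · exact ⟨m, hm, fun _ => .rfl⟩
    · obtain ⟨m', hm', h⟩ := ih (m - p) (by omega)
      refine ⟨m', hm', fun c => ?_⟩
      have := hshift (m - p) c (by omega)
      rw [ShiftInvariant, Nat.sub_add_cancel (by omega)] at this
      exact this.trans (h c)

theorem exists_bounded_forall_misereP_heapSum_append_iff (l : List ℕ) :
    ∃ l', (∀ m ∈ l', m ≤ B) ∧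
      ∀ c, MisereP (heapSum d (c ++ l)) ↔ MisereP (heapSum d (c ++ l')) := by
  induction l with
  | nil => exact ⟨[], by simp, fun _ => .rfl⟩
  | cons m l ih =>
    obtain ⟨m', hm', hm⟩ := exists_le_forall_misereP_heapSum_cons_iff hshift hp hB m
    obtain ⟨l', hl', hl⟩ := ih
    refine ⟨m' :: l', by simpa using ⟨hm', hl'⟩, fun c => ?_⟩
    calc MisereP (heapSum d (c ++ m :: l))
        ↔ MisereP (heapSum d (m :: (c ++ l))) := misereP_heapSum_perm List.perm_middle
      _ ↔ MisereP (heapSum d (m' :: (c ++ l))) := hm _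
      _ ↔ MisereP (heapSum d (m' :: (c ++ l'))) := hl (m' :: c)
      _ ↔ MisereP (heapSum d (c ++ m' :: l')) := misereP_heapSum_perm List.perm_middle.symm

end Reduction

theorem misereP_add_iff_heapSum {d : ℕ → ℕ} {G X : PGame} {l₁ l₂ : List ℕ}
    (h₁ : G ≡r heapSum d l₁) (h₂ : X ≡r heapSum d l₂) :
    MisereP (G + X) ↔ MisereP (heapSum d (l₁ ++ l₂)) :=
  misereP_congr ((h₁.add_congr h₂).trans (heapSum_append_relabelling l₁ l₂).symm)

theorem misEquivOn_iff_of_subset {B C : Set PGame} (hBC : B ⊆ C)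
    (h : ∀ X ∈ C, ∃ Y ∈ B, ∀ G ∈ B, MisereP (G + X) ↔ MisereP (G + Y))
    {G₁ G₂ : PGame} (h₁ : G₁ ∈ B) (h₂ : G₂ ∈ B) :
    MisEquivOn B G₁ G₂ ↔ MisEquivOn C G₁ G₂ := by
  refine ⟨fun hB X hX => ?_, fun hC X hX => hC X (hBC hX)⟩
  obtain ⟨Y, hY, hXY⟩ := h X hX
  rw [hXY G₁ h₁, hXY G₂ h₂]
  exact hB Y hY

theorem misere_periodicity_general (d : ℕ → ℕ)
    (k : ℕ) (hk' : ∀ i, k < i → d i = 0)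
    (n₀ p : ℕ) (hn₀ : 0 < n₀) (hp : 0 < p)
    (M : ℕ) (hM : M = 2 * n₀ + 2 * p + k)
    (AM : Set PGame) (hAM : AM = gameClosure {X | ∃ n ≤ M, X = octalHeap d n})
    (A : Set PGame) (hA : A = gameClosure {X | ∃ n, X = octalHeap d n})
    (hper : ∀ n, n₀ ≤ n → n < 2 * n₀ + p + k →
      MisEquivOn AM (octalHeap d (n + p)) (octalHeap d n)) :
    (∀ G₁ ∈ AM, ∀ G₂ ∈ AM, (MisEquivOn AM G₁ G₂ ↔ MisEquivOn A G₁ G₂)) ∧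
      ∀ n, n₀ ≤ n → MisEquivOn A (octalHeap d (n + p)) (octalHeap d n) := by
  subst hAM hA
  have hshift : ∀ n l, n₀ ≤ n → ShiftInvariant d p n l :=
    shiftInvariant_of_window hk' hn₀ hp fun n hn hn' l hl =>
      hper n hn hn' _ (heapSum_mem_gameClosure fun m hm => ⟨m, hM ▸ hl m hm, rfl⟩)
  refine ⟨fun G₁ hG₁ G₂ hG₂ => misEquivOn_iff_of_subset (gameClosure_mono ?_) (fun X hX => ?_)
    hG₁ hG₂, fun n hn X hX => ?_⟩
  · exact fun X ⟨n, _, hX⟩ => ⟨n, hX⟩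
  · obtain ⟨l, hl⟩ := exists_heapSum_of_mem_gameClosure_octalHeap hX
    obtain ⟨l', hl'M, hl'⟩ := exists_bounded_forall_misereP_heapSum_append_iff hshift hp
      (show n₀ + p ≤ M by omega) l
    refine ⟨heapSum d l', heapSum_mem_gameClosure fun m hm => ⟨m, hl'M m hm, rfl⟩, fun G hG => ?_⟩
    obtain ⟨lG, -, hG⟩ :=
      exists_heapSum_of_mem_gameClosure (fun _ _ => le_trans) (fun _ hX => hX) hG
    rw [misereP_add_iff_heapSum hG hl, misereP_add_iff_heapSum hG (.refl _)]
    exact hl' lG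
  · obtain ⟨l, hl⟩ := exists_heapSum_of_mem_gameClosure_octalHeap hX
    have hX : ∀ m, octalHeap d m + X ≡r heapSum d (m :: l) := fun _ =>
      (Relabelling.refl _).add_congr hl
    exact (misereP_congr (hX _)).trans ((hshift n l hn).trans (misereP_congr (hX n)).symm)

/-- **Misère Periodicity Theorem (game-level form).** Let `Γ` be an octal game with code
`0.d₁…d_k`, `d_k ≠ 0`, `d_i = 0` for `i > k`.  Fix `n₀ > 0`, `p > 0`, set
`M = 2n₀ + 2p + k`, let `𝒜_M = cl (H₀, …, H_M)` and `𝒜 = cl (H₀, H₁, …)`.  If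
`H (n+p) ≡_{𝒜_M} H n` for every `n` with `n₀ ≤ n < 2n₀ + p + k`, then (a) for all
`G₁, G₂ ∈ 𝒜_M`, `G₁ ≡_{𝒜_M} G₂` iff `G₁ ≡_𝒜 G₂`; and (b) `H (n+p) ≡_𝒜 H n` for all
`n ≥ n₀`. -/
theorem misere_periodicity (d : ℕ → ℕ) (hd : ∀ j, d j < 8)
    (k : ℕ) (hk1 : 1 ≤ k) (hk : d k ≠ 0) (hk' : ∀ i, k < i → d i = 0)
    (n₀ p : ℕ) (hn₀ : 0 < n₀) (hp : 0 < p)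
    (M : ℕ) (hM : M = 2 * n₀ + 2 * p + k)
    (AM : Set PGame) (hAM : AM = gameClosure {X | ∃ n ≤ M, X = octalHeap d n})
    (A : Set PGame) (hA : A = gameClosure {X | ∃ n, X = octalHeap d n})
    (hper : ∀ n, n₀ ≤ n → n < 2 * n₀ + p + k →
      MisEquivOn AM (octalHeap d (n + p)) (octalHeap d n)) :
    (∀ G₁ ∈ AM, ∀ G₂ ∈ AM, (MisEquivOn AM G₁ G₂ ↔ MisEquivOn A G₁ G₂)) ∧
      ∀ n, n₀ ≤ n → MisEquivOn A (octalHeap d (n + p)) (octalHeap d n) :=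
  misere_periodicity_general d k hk' n₀ p hn₀ hp M hM AM hAM A hA hper
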